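/- Assume 0 < α_NH ≤ α_H, β ≥ 0, and that every item v ∈ Ω satisfies ‖v‖ < (1/6)·(√(‖u0‖² + 12(α_NH + β)/(5 n d α_H)) − ‖u0‖) in Euclidean norm. Then F is a contraction in its second argument uniformly over all policies: there exists a constant L < 1, independent of π, such that ‖F(π,u) − F(π,u')‖ ≤ L·‖u − u'‖ for every policy π ∈ 𝔓 and all u, u' ∈ ℝ^d. -/

import Mathlib

open Finset
open scoped RealInnerProductSpace

noncomputable section

/-- User/item profile space: `ℝ^d` with the Euclidean norm. -/
abbrev Vec (d : ℕ) := EuclideanSpace ℝ (Fin d)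

/-- MNL score of item `v` under user profile `u`: `s_v(u) = exp(⟨v,u⟩)`. -/
def score {d : ℕ} {ι : Type} (V : ι → Vec d) (u : Vec d) (v : ι) : ℝ :=
  Real.exp ⟪V v, u⟫

/-- Total score of a set of items: `s_A(u) = ∑_{v∈A} s_v(u)`. -/
def sSet {d : ℕ} {ι : Type} (V : ι → Vec d) (u : Vec d) (A : Finset ι) : ℝ :=
  ∑ v ∈ A, score V u v

/-- MNL click function `g(x) = x/(x+c)`. -/
def gfun (c x : ℝ) : ℝ := x / (x + c)

/-- Probability that the user selects item `v`, conditional on recommended set `E`. -/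
def pvE {d : ℕ} {ι : Type} [Fintype ι] [DecidableEq ι]
    (V : ι → Vec d) (c : ℝ) (u : Vec d) (E : Finset ι) (v : ι) : ℝ :=
  if E = ∅ then score V u v / sSet V u Finset.univ
  else if v ∈ E then
    score V u v / sSet V u E * gfun c (sSet V u E)
      + score V u v / sSet V u Finset.univ * (1 - gfun c (sSet V u E))
  else score V u v / sSet V u Finset.univ * (1 - gfun c (sSet V u E))

/-- Unconditional probability that the user selects item `v` under policy `π`:
`p_v(π,u) = ∑_{C∈𝒞} p_C ∑_{E⊆C} p_{E|C} p_{v|E}(u)`. -/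
def pv {d : ℕ} {ι : Type} [Fintype ι] [DecidableEq ι]
    (V : ι → Vec d) (c : ℝ) (cand : Finset (Finset ι)) (pC : Finset ι → ℝ)
    (π : Finset ι → Finset ι → ℝ) (u : Vec d) (v : ι) : ℝ :=
  ∑ C ∈ cand, pC C * (∑ E ∈ C.powerset, π C E * pvE V c u E v)

/-- The fixed-point map
`F(π,u) = (β u0 + ∑_v α_v p_v(π,u) v) / (β + ∑_v α_v p_v(π,u))`. -/
def Fmap {d : ℕ} {ι : Type} [Fintype ι] [DecidableEq ι]
    (V : ι → Vec d) (c : ℝ) (cand : Finset (Finset ι)) (pC : Finset ι → ℝ)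
    (α : ι → ℝ) (β : ℝ) (u0 : Vec d)
    (π : Finset ι → Finset ι → ℝ) (u : Vec d) : Vec d :=
  (β + ∑ v, α v * pv V c cand pC π u v)⁻¹ •
    (β • u0 + ∑ v, (α v * pv V c cand pC π u v) • V v)

/-- A recommendation policy: for each candidate set `C ∈ 𝒞`, a probability
distribution over subsets `E ⊆ C`. -/
def ValidPolicy {ι : Type} [DecidableEq ι] (cand : Finset (Finset ι))
    (π : Finset ι → Finset ι → ℝ) : Prop :=
  ∀ C ∈ cand, (∀ E ∈ C.powerset, 0 ≤ π C E) ∧ (∑ E ∈ C.powerset, π C E) = 1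
set_option linter.unusedSectionVars false
set_option linter.unusedVariables false
set_option maxHeartbeats 1000000
section Aux
variable {d : ℕ} {ι : Type} [Fintype ι] [DecidableEq ι] [Nonempty ι]

lemma score_pos (V : ι → Vec d) (u : Vec d) (v : ι) : 0 < score V u v := Real.exp_pos _

lemma sSet_pos (V : ι → Vec d) (u : Vec d) {A : Finset ι} (hA : A.Nonempty) :
    0 < sSet V u A := Finset.sum_pos (fun v _ => score_pos V u v) hA

lemma sSet_univ_pos (V : ι → Vec d) (u : Vec d) : 0 < sSet V u (univ : Finset ι) :=
  sSet_pos V u univ_nonempty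

lemma gfun_nonneg {c x : ℝ} (hc : 0 < c) (hx : 0 ≤ x) : 0 ≤ gfun c x :=
  div_nonneg hx (by linarith)

lemma gfun_le_one {c x : ℝ} (hc : 0 < c) (hx : 0 ≤ x) : gfun c x ≤ 1 := by
  rw [gfun, div_le_one (by linarith)]; linarith

lemma sum_score_div (V : ι → Vec d) (u : Vec d) {A : Finset ι} (hA : A.Nonempty) :
    ∑ v ∈ A, score V u v / sSet V u A = 1 := by
  rw [← Finset.sum_div, ← sSet, div_self (sSet_pos V u hA).ne']

lemma pvE_nonneg (V : ι → Vec d) {c : ℝ} (hc : 0 < c) (u : Vec d) (E : Finset ι) (v : ι) :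
    0 ≤ pvE V c u E v := by
  rcases eq_or_ne E ∅ with h | h
  · subst h
    simp only [pvE, if_pos rfl]
    exact le_of_lt (div_pos (score_pos V u v) (sSet_univ_pos V u))
  · have hE : E.Nonempty := Finset.nonempty_iff_ne_empty.2 h
    have hg0 := gfun_nonneg hc (le_of_lt (sSet_pos V u hE))
    have hg1 := gfun_le_one hc (le_of_lt (sSet_pos V u hE))
    have h1 : (0:ℝ) ≤ score V u v / sSet V u E := le_of_lt (div_pos (score_pos V u v) (sSet_pos V u hE))
    have h2 : (0:ℝ) ≤ score V u v / sSet V u univ := le_of_lt (div_pos (score_pos V u v) (sSet_univ_pos V u))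
    simp only [pvE, if_neg h]
    by_cases hv : v ∈ E <;> simp only [if_pos, hv, if_neg, if_true, if_false] <;> nlinarith

lemma sum_pvE (V : ι → Vec d) {c : ℝ} (hc : 0 < c) (u : Vec d) (E : Finset ι) :
    ∑ v, pvE V c u E v = 1 := by
  rcases eq_or_ne E ∅ with h | h
  · subst h
    simp only [pvE, if_pos rfl]
    exact sum_score_div V u univ_nonempty
  · have hE : E.Nonempty := Finset.nonempty_iff_ne_empty.2 h
    have key : ∀ v : ι, pvE V c u E v =
        (if v ∈ E then score V u v / sSet V u E * gfun c (sSet V u E) else 0)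
          + score V u v / sSet V u univ * (1 - gfun c (sSet V u E)) := by
      intro v
      simp only [pvE, if_neg h]
      by_cases hv : v ∈ E <;> simp [hv]
    simp only [key, Finset.sum_add_distrib]
    rw [Finset.sum_ite_mem, Finset.univ_inter, ← Finset.sum_mul, ← Finset.sum_mul,
      sum_score_div V u hE, sum_score_div V u univ_nonempty]
    ring

lemma pv_nonneg (V : ι → Vec d) {c : ℝ} (hc : 0 < c) (cand : Finset (Finset ι))
    {pC : Finset ι → ℝ} (hpC0 : ∀ C ∈ cand, 0 ≤ pC C)
    {π : Finset ι → Finset ι → ℝ} (hπ : ValidPolicy cand π) (u : Vec d) (v : ι) :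
    0 ≤ pv V c cand pC π u v := by
  refine Finset.sum_nonneg fun C hC => mul_nonneg (hpC0 C hC) (Finset.sum_nonneg fun E hE => ?_)
  exact mul_nonneg ((hπ C hC).1 E hE) (pvE_nonneg V hc u E v)

lemma sum_pv (V : ι → Vec d) {c : ℝ} (hc : 0 < c) (cand : Finset (Finset ι))
    {pC : Finset ι → ℝ} (hpC1 : (∑ C ∈ cand, pC C) = 1)
    {π : Finset ι → Finset ι → ℝ} (hπ : ValidPolicy cand π) (u : Vec d) :
    ∑ v, pv V c cand pC π u v = 1 := by
  simp only [pv]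
  rw [Finset.sum_comm]
  calc ∑ C ∈ cand, ∑ v : ι, pC C * (∑ E ∈ C.powerset, π C E * pvE V c u E v)
      = ∑ C ∈ cand, pC C := by
        refine Finset.sum_congr rfl fun C hC => ?_
        rw [← Finset.mul_sum]
        have : ∑ v : ι, ∑ E ∈ C.powerset, π C E * pvE V c u E v
            = ∑ E ∈ C.powerset, π C E * ∑ v : ι, pvE V c u E v := by
          rw [Finset.sum_comm]
          exact Finset.sum_congr rfl fun E _ => by rw [Finset.mul_sum]
        rw [this]
        simp only [sum_pvE V hc u, mul_one, (hπ C hC).2, mul_one]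
    _ = 1 := hpC1

end Aux
section Deriv
variable {d : ℕ} {ι : Type} [Fintype ι] [DecidableEq ι] [Nonempty ι]

/-- straight-line path from `u'` to `u`. -/
def lineTo {d : ℕ} (u' u : Vec d) (t : ℝ) : Vec d := u' + t • (u - u')

@[simp] lemma lineTo_zero (u' u : Vec d) : lineTo u' u 0 = u' := by simp [lineTo]
@[simp] lemma lineTo_one (u' u : Vec d) : lineTo u' u 1 = u := by simp [lineTo]

/-- inner product with the direction. -/
def bb {d : ℕ} {ι : Type} (V : ι → Vec d) (u u' : Vec d) (v : ι) : ℝ := ⟪V v, u - u'⟫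

/-- derivative of `t ↦ sSet V (lineTo u' u t) A`. -/
def DS (V : ι → Vec d) (u u' : Vec d) (t : ℝ) (A : Finset ι) : ℝ :=
  ∑ w ∈ A, bb V u u' w * score V (lineTo u' u t) w

lemma hasDerivAt_score (V : ι → Vec d) (u u' : Vec d) (v : ι) (t : ℝ) :
    HasDerivAt (fun τ => score V (lineTo u' u τ) v)
      (bb V u u' v * score V (lineTo u' u t) v) t := by
  have key : ∀ τ : ℝ, score V (lineTo u' u τ) v
      = Real.exp (⟪V v, u'⟫ + ⟪V v, u - u'⟫ * τ) := by
    intro τ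
    rw [score]
    congr 1
    rw [lineTo, inner_add_right, real_inner_smul_right]
    ring
  rw [show (fun τ => score V (lineTo u' u τ) v)
      = fun τ => Real.exp (⟪V v, u'⟫ + ⟪V v, u - u'⟫ * τ) from funext key, key t, bb]
  have h := (((hasDerivAt_id t).const_mul (⟪V v, u - u'⟫ : ℝ)).const_add
      (⟪V v, u'⟫ : ℝ)).exp
  simp only [id_eq, mul_one] at h
  simpa [mul_comm] using h

lemma hasDerivAt_sSet (V : ι → Vec d) (u u' : Vec d) (A : Finset ι) (t : ℝ) :
    HasDerivAt (fun τ => sSet V (lineTo u' u τ) A) (DS V u u' t A) t := by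
  have : (fun τ => sSet V (lineTo u' u τ) A) = fun τ => ∑ w ∈ A, score V (lineTo u' u τ) w := by
    funext τ; rfl
  rw [this, DS]
  exact HasDerivAt.fun_sum fun w _ => hasDerivAt_score V u u' w t

/-- derivative of `t ↦ score/sSet A`. -/
def qd (V : ι → Vec d) (u u' : Vec d) (t : ℝ) (A : Finset ι) (v : ι) : ℝ :=
  (bb V u u' v * score V (lineTo u' u t) v * sSet V (lineTo u' u t) A
    - score V (lineTo u' u t) v * DS V u u' t A) / (sSet V (lineTo u' u t) A)^2

/-- derivative of `t ↦ gfun c (sSet E)`. -/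
def Gd (V : ι → Vec d) (c : ℝ) (u u' : Vec d) (t : ℝ) (E : Finset ι) : ℝ :=
  (DS V u u' t E * (sSet V (lineTo u' u t) E + c)
    - sSet V (lineTo u' u t) E * DS V u u' t E) / (sSet V (lineTo u' u t) E + c)^2

lemma hasDerivAt_quot (V : ι → Vec d) (u u' : Vec d) {A : Finset ι} (hA : A.Nonempty)
    (v : ι) (t : ℝ) :
    HasDerivAt (fun τ => score V (lineTo u' u τ) v / sSet V (lineTo u' u τ) A)
      (qd V u u' t A v) t :=
  (hasDerivAt_score V u u' v t).div (hasDerivAt_sSet V u u' A t)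
    (sSet_pos V _ hA).ne'

lemma hasDerivAt_gpath (V : ι → Vec d) {c : ℝ} (hc : 0 < c) (u u' : Vec d)
    {E : Finset ι} (hE : E.Nonempty) (t : ℝ) :
    HasDerivAt (fun τ => gfun c (sSet V (lineTo u' u τ) E)) (Gd V c u u' t E) t := by
  have hne : sSet V (lineTo u' u t) E + c ≠ 0 := by
    have := sSet_pos V (lineTo u' u t) hE; positivity
  have h := (hasDerivAt_sSet V u u' E t).fun_div
    ((hasDerivAt_sSet V u u' E t).add_const c) hne
  simpa [gfun, Gd] using h

/-- derivative of `t ↦ pvE V c (lineTo u' u t) E v`. -/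
def pvE' (V : ι → Vec d) (c : ℝ) (u u' : Vec d) (t : ℝ) (E : Finset ι) (v : ι) : ℝ :=
  if E = ∅ then qd V u u' t univ v
  else (if v ∈ E then qd V u u' t E v * gfun c (sSet V (lineTo u' u t) E)
          + score V (lineTo u' u t) v / sSet V (lineTo u' u t) E * Gd V c u u' t E else 0)
    + (qd V u u' t univ v * (1 - gfun c (sSet V (lineTo u' u t) E))
        + score V (lineTo u' u t) v / sSet V (lineTo u' u t) univ * (-Gd V c u u' t E))

lemma hasDerivAt_pvE (V : ι → Vec d) {c : ℝ} (hc : 0 < c) (u u' : Vec d)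
    (E : Finset ι) (v : ι) (t : ℝ) :
    HasDerivAt (fun τ => pvE V c (lineTo u' u τ) E v) (pvE' V c u u' t E v) t := by
  rcases eq_or_ne E ∅ with h | h
  · subst h
    simp only [pvE, pvE', if_pos rfl]
    exact hasDerivAt_quot V u u' univ_nonempty v t
  · have hE : E.Nonempty := Finset.nonempty_iff_ne_empty.2 h
    by_cases hv : v ∈ E
    · have hfun : (fun τ => pvE V c (lineTo u' u τ) E v)
          = fun τ => score V (lineTo u' u τ) v / sSet V (lineTo u' u τ) E
              * gfun c (sSet V (lineTo u' u τ) E)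
            + score V (lineTo u' u τ) v / sSet V (lineTo u' u τ) univ
              * (1 - gfun c (sSet V (lineTo u' u τ) E)) := by
        funext τ; simp [pvE, h, hv]
      rw [hfun]
      have h1 := (hasDerivAt_quot V u u' hE v t).fun_mul (hasDerivAt_gpath V hc u u' hE t)
      have h2 := (hasDerivAt_quot V u u' univ_nonempty v t).fun_mul
        ((hasDerivAt_gpath V hc u u' hE t).const_sub 1)
      have h3 := h1.fun_add h2
      simp only [pvE', if_neg h, if_pos hv]
      convert h3 using 1 <;> ring
    · have hfun : (fun τ => pvE V c (lineTo u' u τ) E v)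
          = fun τ => score V (lineTo u' u τ) v / sSet V (lineTo u' u τ) univ
              * (1 - gfun c (sSet V (lineTo u' u τ) E)) := by
        funext τ; simp [pvE, h, hv]
      rw [hfun]
      have h2 := (hasDerivAt_quot V u u' univ_nonempty v t).fun_mul
        ((hasDerivAt_gpath V hc u u' hE t).const_sub 1)
      simp only [pvE', if_neg h, if_neg hv]
      exact h2.congr_deriv (by ring)

/-- derivative of `t ↦ pv V c cand pC π (lineTo u' u t) v`. -/
def pvD (V : ι → Vec d) (c : ℝ) (cand : Finset (Finset ι)) (pC : Finset ι → ℝ)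
    (π : Finset ι → Finset ι → ℝ) (u u' : Vec d) (t : ℝ) (v : ι) : ℝ :=
  ∑ C ∈ cand, pC C * ∑ E ∈ C.powerset, π C E * pvE' V c u u' t E v

lemma hasDerivAt_pv (V : ι → Vec d) {c : ℝ} (hc : 0 < c) (cand : Finset (Finset ι))
    (pC : Finset ι → ℝ) (π : Finset ι → Finset ι → ℝ) (u u' : Vec d) (v : ι) (t : ℝ) :
    HasDerivAt (fun τ => pv V c cand pC π (lineTo u' u τ) v)
      (pvD V c cand pC π u u' t v) t := by
  have : (fun τ => pv V c cand pC π (lineTo u' u τ) v)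
      = fun τ => ∑ C ∈ cand, pC C * ∑ E ∈ C.powerset, π C E * pvE V c (lineTo u' u τ) E v := by
    funext τ; rfl
  rw [this, pvD]
  exact HasDerivAt.fun_sum fun C _ =>
    (HasDerivAt.fun_sum fun E _ => (hasDerivAt_pvE V hc u u' E v t).const_mul (π C E)).const_mul (pC C)

end Deriv
section Bounds
variable {d : ℕ} {ι : Type} [Fintype ι] [DecidableEq ι] [Nonempty ι]
variable {V : ι → Vec d} {c : ℝ} {u u' : Vec d} {R : ℝ}

lemma abs_DS_le (hb : ∀ v, |bb V u u' v| ≤ R) (t : ℝ) (A : Finset ι) :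
    |DS V u u' t A| ≤ R * sSet V (lineTo u' u t) A := by
  calc |DS V u u' t A| ≤ ∑ w ∈ A, |bb V u u' w * score V (lineTo u' u t) w| :=
        Finset.abs_sum_le_sum_abs _ _
    _ ≤ ∑ w ∈ A, R * score V (lineTo u' u t) w := by
        refine Finset.sum_le_sum fun w _ => ?_
        rw [abs_mul, abs_of_pos (score_pos V _ w)]
        exact mul_le_mul_of_nonneg_right (hb w) (score_pos V _ w).le
    _ = R * sSet V (lineTo u' u t) A := by rw [sSet, Finset.mul_sum]

lemma abs_qd_le (hb : ∀ v, |bb V u u' v| ≤ R) {A : Finset ι} (hA : A.Nonempty)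
    (t : ℝ) (v : ι) :
    |qd V u u' t A v| ≤ 2 * R * (score V (lineTo u' u t) v / sSet V (lineTo u' u t) A) := by
  set s := score V (lineTo u' u t) v with hs
  set S := sSet V (lineTo u' u t) A with hS
  have hSpos : 0 < S := sSet_pos V _ hA
  have hqd : qd V u u' t A v = s / S * (bb V u u' v - DS V u u' t A / S) := by
    rw [qd, ← hs, ← hS]; field_simp
  rw [hqd, abs_mul, abs_of_pos (div_pos (score_pos V _ v) hSpos)]
  have habs : |bb V u u' v - DS V u u' t A / S| ≤ 2 * R := by
    calc |bb V u u' v - DS V u u' t A / S| ≤ |bb V u u' v| + |DS V u u' t A / S| := abs_sub _ _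
      _ ≤ R + R := by
          refine add_le_add (hb v) ?_
          rw [abs_div, abs_of_pos hSpos, div_le_iff₀ hSpos]
          exact abs_DS_le hb t A
      _ = 2 * R := by ring
  calc s / S * |bb V u u' v - DS V u u' t A / S| ≤ s / S * (2 * R) :=
        mul_le_mul_of_nonneg_left habs (div_pos (score_pos V _ v) hSpos).le
    _ = 2 * R * (s / S) := by ring

lemma sum_mul_quot_le {A : Finset ι} (hA : A.Nonempty) {tv : ι → ℝ} {M : ℝ}
    (htv : ∀ v, |tv v| ≤ M) (t : ℝ) :
    |∑ v ∈ A, tv v * (score V (lineTo u' u t) v / sSet V (lineTo u' u t) A)| ≤ M := by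
  calc |∑ v ∈ A, tv v * (score V (lineTo u' u t) v / sSet V (lineTo u' u t) A)|
      ≤ ∑ v ∈ A, |tv v * (score V (lineTo u' u t) v / sSet V (lineTo u' u t) A)| :=
        Finset.abs_sum_le_sum_abs _ _
    _ ≤ ∑ v ∈ A, M * (score V (lineTo u' u t) v / sSet V (lineTo u' u t) A) := by
        refine Finset.sum_le_sum fun v _ => ?_
        rw [abs_mul, abs_of_pos (div_pos (score_pos V _ v) (sSet_pos V _ hA))]
        exact mul_le_mul_of_nonneg_right (htv v)
          (div_pos (score_pos V _ v) (sSet_pos V _ hA)).le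
    _ = M := by rw [← Finset.mul_sum, sum_score_div V _ hA, mul_one]

lemma sum_mul_qd_le (hb : ∀ v, |bb V u u' v| ≤ R) (hR : 0 ≤ R) {A : Finset ι}
    (hA : A.Nonempty) {tv : ι → ℝ} {M : ℝ} (htv : ∀ v, |tv v| ≤ M) (hM : 0 ≤ M) (t : ℝ) :
    |∑ v ∈ A, tv v * qd V u u' t A v| ≤ 2 * M * R := by
  calc |∑ v ∈ A, tv v * qd V u u' t A v| ≤ ∑ v ∈ A, |tv v * qd V u u' t A v| :=
        Finset.abs_sum_le_sum_abs _ _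
    _ ≤ ∑ v ∈ A, M * (2 * R * (score V (lineTo u' u t) v / sSet V (lineTo u' u t) A)) := by
        refine Finset.sum_le_sum fun v _ => ?_
        rw [abs_mul]
        refine mul_le_mul (htv v) (abs_qd_le hb hA t v) (abs_nonneg _) hM
    _ = 2 * M * R := by
        rw [← Finset.mul_sum, ← Finset.mul_sum, sum_score_div V _ hA]
        ring

lemma abs_Gd_le (hb : ∀ v, |bb V u u' v| ≤ R) (hR : 0 ≤ R) (hc : 0 < c)
    {E : Finset ι} (hE : E.Nonempty) (t : ℝ) :
    |Gd V c u u' t E| ≤ R := by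
  set S := sSet V (lineTo u' u t) E with hS
  have hSpos : 0 < S := sSet_pos V _ hE
  have hGd : Gd V c u u' t E = DS V u u' t E * c / (S + c)^2 := by
    rw [Gd, ← hS]; ring_nf
  rw [hGd, abs_div, abs_of_pos (by positivity : (0:ℝ) < (S + c)^2), div_le_iff₀ (by positivity)]
  rw [abs_mul, abs_of_pos hc]
  calc |DS V u u' t E| * c ≤ R * S * c := by
        exact mul_le_mul_of_nonneg_right (abs_DS_le hb t E) hc.le
    _ ≤ R * (S + c)^2 := by nlinarith [sq_nonneg (S - c), sq_nonneg (S + c)]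

lemma sum_mul_pvE'_le (hb : ∀ v, |bb V u u' v| ≤ R) (hR : 0 ≤ R) (hc : 0 < c)
    (E : Finset ι) {tv : ι → ℝ} {M : ℝ} (htv : ∀ v, |tv v| ≤ M) (hM : 0 ≤ M) (t : ℝ) :
    |∑ v, tv v * pvE' V c u u' t E v| ≤ 4 * M * R := by
  rcases eq_or_ne E ∅ with h | h
  · simp only [pvE', if_pos h]
    have := sum_mul_qd_le hb hR (univ_nonempty (α := ι)) htv hM t
    calc |∑ v, tv v * qd V u u' t univ v| ≤ 2 * M * R := this
      _ ≤ 4 * M * R := by nlinarith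
  · have hE : E.Nonempty := Finset.nonempty_iff_ne_empty.2 h
    set g := gfun c (sSet V (lineTo u' u t) E) with hg
    set G := Gd V c u u' t E with hGdef
    have hg0 : 0 ≤ g := gfun_nonneg hc (sSet_pos V _ hE).le
    have hg1 : g ≤ 1 := gfun_le_one hc (sSet_pos V _ hE).le
    have hGle : |G| ≤ R := abs_Gd_le hb hR hc hE t
    have hsplit : ∑ v, tv v * pvE' V c u u' t E v
        = (∑ v ∈ E, tv v * qd V u u' t E v) * g
          + (∑ v ∈ E, tv v * (score V (lineTo u' u t) v / sSet V (lineTo u' u t) E)) * G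
          + ((∑ v, tv v * qd V u u' t univ v) * (1 - g)
            + (∑ v, tv v * (score V (lineTo u' u t) v / sSet V (lineTo u' u t) univ)) * (-G)) := by
      simp only [pvE', if_neg h, mul_add, mul_ite, mul_zero]
      rw [Finset.sum_add_distrib, Finset.sum_ite_mem, Finset.univ_inter]
      rw [Finset.sum_add_distrib, Finset.sum_add_distrib]
      simp only [Finset.sum_mul]
      congr 1
      · congr 1 <;> · refine Finset.sum_congr rfl fun v _ => by ring
      · congr 1 <;> · refine Finset.sum_congr rfl fun v _ => by ring
    rw [hsplit]
    have h1 : |(∑ v ∈ E, tv v * qd V u u' t E v) * g| ≤ 2 * M * R * g := by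
      rw [abs_mul, abs_of_nonneg hg0]
      exact mul_le_mul_of_nonneg_right (sum_mul_qd_le hb hR hE htv hM t) hg0
    have h2 : |(∑ v ∈ E, tv v * (score V (lineTo u' u t) v / sSet V (lineTo u' u t) E)) * G|
        ≤ M * R := by
      rw [abs_mul]
      exact mul_le_mul (sum_mul_quot_le hE htv t) hGle (abs_nonneg _) hM
    have h3 : |(∑ v, tv v * qd V u u' t univ v) * (1 - g)| ≤ 2 * M * R * (1 - g) := by
      rw [abs_mul, abs_of_nonneg (by linarith : (0:ℝ) ≤ 1 - g)]
      exact mul_le_mul_of_nonneg_right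
        (sum_mul_qd_le hb hR (univ_nonempty (α := ι)) htv hM t) (by linarith)
    have h4 : |(∑ v, tv v * (score V (lineTo u' u t) v / sSet V (lineTo u' u t) univ)) * (-G)|
        ≤ M * R := by
      rw [abs_mul, abs_neg]
      exact mul_le_mul (sum_mul_quot_le (univ_nonempty (α := ι)) htv t) hGle (abs_nonneg _) hM
    calc |_ + _ + (_ + _)| ≤ _ := abs_add_le _ _
      _ ≤ (2 * M * R * g + M * R) + (2 * M * R * (1 - g) + M * R) := by
          refine add_le_add (le_trans (abs_add_le _ _) (add_le_add h1 h2))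
            (le_trans (abs_add_le _ _) (add_le_add h3 h4))
      _ ≤ 4 * M * R := by nlinarith
end Bounds
section Assemble
variable {d : ℕ} {ι : Type} [Fintype ι] [DecidableEq ι] [Nonempty ι]
variable {V : ι → Vec d} {c : ℝ} {u u' : Vec d} {R : ℝ}

lemma sum_mul_pvD_le {cand : Finset (Finset ι)} {pC : Finset ι → ℝ}
    {π : Finset ι → Finset ι → ℝ} (hpC0 : ∀ C ∈ cand, 0 ≤ pC C)
    (hpC1 : (∑ C ∈ cand, pC C) = 1) (hπ : ValidPolicy cand π)
    (hb : ∀ v, |bb V u u' v| ≤ R) (hR : 0 ≤ R) (hc : 0 < c)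
    {tv : ι → ℝ} {M : ℝ} (htv : ∀ v, |tv v| ≤ M) (hM : 0 ≤ M) (t : ℝ) :
    |∑ v, tv v * pvD V c cand pC π u u' t v| ≤ 4 * M * R := by
  have hswap : ∑ v, tv v * pvD V c cand pC π u u' t v
      = ∑ C ∈ cand, pC C * ∑ E ∈ C.powerset, π C E * (∑ v, tv v * pvE' V c u u' t E v) := by
    simp only [pvD, Finset.mul_sum]
    rw [Finset.sum_comm]
    refine Finset.sum_congr rfl fun C _ => ?_
    rw [Finset.sum_comm]
    exact Finset.sum_congr rfl fun E _ => Finset.sum_congr rfl fun v _ => by ring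
  rw [hswap]
  calc |∑ C ∈ cand, pC C * ∑ E ∈ C.powerset, π C E * (∑ v, tv v * pvE' V c u u' t E v)|
      ≤ ∑ C ∈ cand, |pC C * ∑ E ∈ C.powerset, π C E * (∑ v, tv v * pvE' V c u u' t E v)| :=
        Finset.abs_sum_le_sum_abs _ _
    _ ≤ ∑ C ∈ cand, pC C * (4 * M * R) := by
        refine Finset.sum_le_sum fun C hC => ?_
        rw [abs_mul, abs_of_nonneg (hpC0 C hC)]
        refine mul_le_mul_of_nonneg_left ?_ (hpC0 C hC)
        calc |∑ E ∈ C.powerset, π C E * (∑ v, tv v * pvE' V c u u' t E v)|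
            ≤ ∑ E ∈ C.powerset, |π C E * (∑ v, tv v * pvE' V c u u' t E v)| :=
              Finset.abs_sum_le_sum_abs _ _
          _ ≤ ∑ E ∈ C.powerset, π C E * (4 * M * R) := by
              refine Finset.sum_le_sum fun E hE => ?_
              rw [abs_mul, abs_of_nonneg ((hπ C hC).1 E hE)]
              exact mul_le_mul_of_nonneg_left
                (sum_mul_pvE'_le hb hR hc E htv hM t) ((hπ C hC).1 E hE)
          _ = 4 * M * R := by rw [← Finset.sum_mul, (hπ C hC).2, one_mul]
    _ = 4 * M * R := by rw [← Finset.sum_mul, hpC1, one_mul]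

lemma mvt01 {f f' : ℝ → ℝ} {K : ℝ} (h : ∀ t, HasDerivAt f (f' t) t)
    (hbd : ∀ t ∈ Set.Icc (0:ℝ) 1, |f' t| ≤ K) : |f 1 - f 0| ≤ K := by
  have := norm_image_sub_le_of_norm_deriv_le_segment' (f := f) (f' := f') (a := 0) (b := 1)
    (fun x _ => (h x).hasDerivWithinAt)
    (fun x hx => by simpa using hbd x (Set.Ico_subset_Icc_self hx))
    1 (Set.right_mem_Icc.2 zero_le_one)
  simpa using this

lemma inner_Fmap (V : ι → Vec d) (c : ℝ) (cand : Finset (Finset ι)) (pC : Finset ι → ℝ)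
    (α : ι → ℝ) (β : ℝ) (u0 : Vec d) (π : Finset ι → Finset ι → ℝ) (x w : Vec d) :
    ⟪w, Fmap V c cand pC α β u0 π x⟫
      = (β + ∑ v, α v * pv V c cand pC π x v)⁻¹
        * (β * ⟪w, u0⟫ + ∑ v, (α v * ⟪w, V v⟫) * pv V c cand pC π x v) := by
  rw [Fmap, real_inner_smul_right, inner_add_right, real_inner_smul_right, inner_sum]
  congr 1
  congr 1
  refine Finset.sum_congr rfl fun v _ => ?_
  rw [real_inner_smul_right]
  ring

lemma norm_Fmap_le {cand : Finset (Finset ι)} {pC : Finset ι → ℝ}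
    {π : Finset ι → Finset ι → ℝ} (hpC0 : ∀ C ∈ cand, 0 ≤ pC C)
    (hpC1 : (∑ C ∈ cand, pC C) = 1) (hπ : ValidPolicy cand π) (hc : 0 < c)
    {α : ι → ℝ} {αNH : ℝ} (hαNH : 0 < αNH) (hαge : ∀ v, αNH ≤ α v)
    {β : ℝ} (hβ : 0 ≤ β) (u0 : Vec d) {ρ : ℝ} (hρ : ∀ v, ‖V v‖ ≤ ρ) (hρ0 : 0 ≤ ρ)
    (x : Vec d) :
    ‖Fmap V c cand pC α β u0 π x‖ ≤ ‖u0‖ + ρ := by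
  have hPnn : ∀ v, 0 ≤ pv V c cand pC π x v := fun v => pv_nonneg V hc cand hpC0 hπ x v
  have hPsum : ∑ v, pv V c cand pC π x v = 1 := sum_pv V hc cand hpC1 hπ x
  set S : ℝ := ∑ v, α v * pv V c cand pC π x v with hSdef
  have hSnn : αNH ≤ S := by
    have h1 : ∑ v, αNH * pv V c cand pC π x v ≤ S := by
      rw [hSdef]
      exact Finset.sum_le_sum fun v _ => mul_le_mul_of_nonneg_right (hαge v) (hPnn v)
    rwa [← Finset.mul_sum, hPsum, mul_one] at h1
  have hD : 0 < β + S := by linarith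
  rw [Fmap, norm_smul, Real.norm_eq_abs, abs_of_pos (inv_pos.2 hD)]
  have hN : ‖β • u0 + ∑ v, (α v * pv V c cand pC π x v) • V v‖ ≤ β * ‖u0‖ + S * ρ := by
    calc ‖β • u0 + ∑ v, (α v * pv V c cand pC π x v) • V v‖
        ≤ ‖β • u0‖ + ‖∑ v, (α v * pv V c cand pC π x v) • V v‖ := norm_add_le _ _
      _ ≤ β * ‖u0‖ + S * ρ := by
          refine add_le_add ?_ ?_
          · rw [norm_smul, Real.norm_eq_abs, abs_of_nonneg hβ]
          · calc ‖∑ v, (α v * pv V c cand pC π x v) • V v‖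
                ≤ ∑ v, ‖(α v * pv V c cand pC π x v) • V v‖ := norm_sum_le _ _
              _ ≤ ∑ v, (α v * pv V c cand pC π x v) * ρ := by
                  refine Finset.sum_le_sum fun v _ => ?_
                  rw [norm_smul, Real.norm_eq_abs, abs_of_nonneg
                    (mul_nonneg (by linarith [hαge v]) (hPnn v))]
                  exact mul_le_mul_of_nonneg_left (hρ v)
                    (mul_nonneg (by linarith [hαge v]) (hPnn v))
              _ = S * ρ := by rw [← Finset.sum_mul]
  calc (β + S)⁻¹ * ‖β • u0 + ∑ v, (α v * pv V c cand pC π x v) • V v‖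
      ≤ (β + S)⁻¹ * (β * ‖u0‖ + S * ρ) :=
        mul_le_mul_of_nonneg_left hN (inv_pos.2 hD).le
    _ ≤ (β + S)⁻¹ * ((β + S) * (‖u0‖ + ρ)) := by
        refine mul_le_mul_of_nonneg_left ?_ (inv_pos.2 hD).le
        nlinarith [norm_nonneg u0]
    _ = ‖u0‖ + ρ := by field_simp

/-- The main Lipschitz estimate. -/
lemma key_estimate {cand : Finset (Finset ι)} {pC : Finset ι → ℝ}
    {π : Finset ι → Finset ι → ℝ} (hpC0 : ∀ C ∈ cand, 0 ≤ pC C)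
    (hpC1 : (∑ C ∈ cand, pC C) = 1) (hπ : ValidPolicy cand π) (hc : 0 < c)
    {α : ι → ℝ} {αH αNH : ℝ} (hαNH : 0 < αNH) (hαH : 0 < αH)
    (hαge : ∀ v, αNH ≤ α v) (hαle : ∀ v, α v ≤ αH)
    {β : ℝ} (hβ : 0 ≤ β) (u0 : Vec d) {ρ : ℝ} (hρ : ∀ v, ‖V v‖ ≤ ρ) (hρ0 : 0 ≤ ρ)
    (u u' : Vec d) :
    ‖Fmap V c cand pC α β u0 π u - Fmap V c cand pC α β u0 π u'‖
      ≤ (4 * αH * ρ * (2 * ρ + ‖u0‖) / (β + αNH)) * ‖u - u'‖ := by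
  have hβα : 0 < β + αNH := by linarith
  set R : ℝ := ρ * ‖u - u'‖ with hRdef
  have hRnn : 0 ≤ R := mul_nonneg hρ0 (norm_nonneg _)
  have hb : ∀ v, |bb V u u' v| ≤ R := by
    intro v
    calc |bb V u u' v| ≤ ‖V v‖ * ‖u - u'‖ := abs_real_inner_le_norm _ _
      _ ≤ R := mul_le_mul_of_nonneg_right (hρ v) (norm_nonneg _)
  have habsα : ∀ v, |α v| ≤ αH := fun v => by
    rw [abs_of_pos (lt_of_lt_of_le hαNH (hαge v))]; exact hαle v
  -- lower bound for the denominator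
  have hDlow : ∀ x : Vec d, β + αNH ≤ β + ∑ v, α v * pv V c cand pC π x v := by
    intro x
    have h1 : ∑ v, αNH * pv V c cand pC π x v ≤ ∑ v, α v * pv V c cand pC π x v :=
      Finset.sum_le_sum fun v _ =>
        mul_le_mul_of_nonneg_right (hαge v) (pv_nonneg V hc cand hpC0 hπ x v)
    rw [← Finset.mul_sum, sum_pv V hc cand hpC1 hπ x, mul_one] at h1
    linarith
  -- Lipschitz bound for the denominator along the path
  have hDlip : |(β + ∑ v, α v * pv V c cand pC π u v)
      - (β + ∑ v, α v * pv V c cand pC π u' v)| ≤ 4 * αH * R := by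
    have hder : ∀ t, HasDerivAt
        (fun τ => β + ∑ v, α v * pv V c cand pC π (lineTo u' u τ) v)
        (∑ v, α v * pvD V c cand pC π u u' t v) t := fun t =>
      HasDerivAt.const_add β (HasDerivAt.fun_sum fun v _ =>
        (hasDerivAt_pv V hc cand pC π u u' v t).const_mul (α v))
    have := mvt01 hder (fun t _ =>
      sum_mul_pvD_le hpC0 hpC1 hπ hb hRnn hc habsα hαH.le t)
    simpa using this
  -- Lipschitz bound for inner products with the numerator
  have hwlip : ∀ w : Vec d,
      |(β * ⟪w, u0⟫ + ∑ v, (α v * ⟪w, V v⟫) * pv V c cand pC π u v)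
        - (β * ⟪w, u0⟫ + ∑ v, (α v * ⟪w, V v⟫) * pv V c cand pC π u' v)|
        ≤ 4 * (αH * (ρ * ‖w‖)) * R := by
    intro w
    have htv : ∀ v, |α v * ⟪w, V v⟫| ≤ αH * (ρ * ‖w‖) := by
      intro v
      rw [abs_mul]
      refine mul_le_mul (habsα v) ?_ (abs_nonneg _) hαH.le
      calc |⟪w, V v⟫| ≤ ‖w‖ * ‖V v‖ := abs_real_inner_le_norm _ _
        _ ≤ ‖w‖ * ρ := mul_le_mul_of_nonneg_left (hρ v) (norm_nonneg _)
        _ = ρ * ‖w‖ := mul_comm _ _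
    have hder : ∀ t, HasDerivAt
        (fun τ => β * ⟪w, u0⟫ + ∑ v, (α v * ⟪w, V v⟫) * pv V c cand pC π (lineTo u' u τ) v)
        (∑ v, (α v * ⟪w, V v⟫) * pvD V c cand pC π u u' t v) t := fun t =>
      HasDerivAt.const_add _ (HasDerivAt.fun_sum fun v _ =>
        (hasDerivAt_pv V hc cand pC π u u' v t).const_mul _)
    have := mvt01 hder (fun t _ =>
      sum_mul_pvD_le hpC0 hpC1 hπ hb hRnn hc htv
        (mul_nonneg hαH.le (mul_nonneg hρ0 (norm_nonneg _))) t)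
    simpa using this
  -- inner-product estimate
  have hw_est : ∀ w : Vec d,
      |⟪w, Fmap V c cand pC α β u0 π u - Fmap V c cand pC α β u0 π u'⟫|
        ≤ (4 * αH * ρ * (2 * ρ + ‖u0‖) / (β + αNH)) * ‖u - u'‖ * ‖w‖ := by
    intro w
    set D1 : ℝ := β + ∑ v, α v * pv V c cand pC π u v with hD1
    set D0 : ℝ := β + ∑ v, α v * pv V c cand pC π u' v with hD0
    set h1 : ℝ := β * ⟪w, u0⟫ + ∑ v, (α v * ⟪w, V v⟫) * pv V c cand pC π u v with hh1
    set h0 : ℝ := β * ⟪w, u0⟫ + ∑ v, (α v * ⟪w, V v⟫) * pv V c cand pC π u' v with hh0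
    have hD1pos : 0 < D1 := lt_of_lt_of_le hβα (hDlow u)
    have hD0pos : 0 < D0 := lt_of_lt_of_le hβα (hDlow u')
    have hinner : ⟪w, Fmap V c cand pC α β u0 π u - Fmap V c cand pC α β u0 π u'⟫
        = h1 / D1 - h0 / D0 := by
      rw [inner_sub_right, inner_Fmap, inner_Fmap, ← hD1, ← hD0, ← hh1, ← hh0]
      rw [div_eq_inv_mul, div_eq_inv_mul]
    have hq : h1 / D1 - h0 / D0 = (h1 - h0) / D1 + h0 / D0 * ((D0 - D1) / D1) := by
      field_simp
      ring
    have hFu' : |h0 / D0| ≤ (‖u0‖ + ρ) * ‖w‖ := by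
      have : h0 / D0 = ⟪w, Fmap V c cand pC α β u0 π u'⟫ := by
        rw [inner_Fmap, ← hD0, ← hh0, div_eq_inv_mul]
      rw [this]
      calc |⟪w, Fmap V c cand pC α β u0 π u'⟫|
          ≤ ‖w‖ * ‖Fmap V c cand pC α β u0 π u'‖ := abs_real_inner_le_norm _ _
        _ ≤ ‖w‖ * (‖u0‖ + ρ) :=
            mul_le_mul_of_nonneg_left
              (norm_Fmap_le hpC0 hpC1 hπ hc hαNH hαge hβ u0 hρ hρ0 u') (norm_nonneg _)
        _ = (‖u0‖ + ρ) * ‖w‖ := mul_comm _ _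
    have e1 : |(h1 - h0) / D1| ≤ 4 * (αH * (ρ * ‖w‖)) * R / (β + αNH) := by
      rw [abs_div, abs_of_pos hD1pos]
      exact div_le_div₀ (by positivity) (hwlip w) hβα (hDlow u)
    have e2 : |h0 / D0 * ((D0 - D1) / D1)| ≤ (‖u0‖ + ρ) * ‖w‖ * (4 * αH * R) / (β + αNH) := by
      rw [abs_mul]
      have hq2 : |(D0 - D1) / D1| ≤ 4 * αH * R / (β + αNH) := by
        rw [abs_div, abs_of_pos hD1pos, abs_sub_comm]
        exact div_le_div₀ (by positivity) hDlip hβα (hDlow u)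
      calc |h0 / D0| * |(D0 - D1) / D1|
          ≤ (‖u0‖ + ρ) * ‖w‖ * (4 * αH * R / (β + αNH)) :=
            mul_le_mul hFu' hq2 (abs_nonneg _) (by positivity)
        _ = (‖u0‖ + ρ) * ‖w‖ * (4 * αH * R) / (β + αNH) := by ring
    calc |⟪w, Fmap V c cand pC α β u0 π u - Fmap V c cand pC α β u0 π u'⟫|
        = |(h1 - h0) / D1 + h0 / D0 * ((D0 - D1) / D1)| := by rw [hinner, hq]
      _ ≤ |(h1 - h0) / D1| + |h0 / D0 * ((D0 - D1) / D1)| := abs_add_le _ _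
      _ ≤ 4 * (αH * (ρ * ‖w‖)) * R / (β + αNH)
          + (‖u0‖ + ρ) * ‖w‖ * (4 * αH * R) / (β + αNH) := add_le_add e1 e2
      _ = (4 * αH * ρ * (2 * ρ + ‖u0‖) / (β + αNH)) * ‖u - u'‖ * ‖w‖ := by
          rw [hRdef]
          field_simp
          ring
  -- conclude via w = the difference itself
  set ΔF := Fmap V c cand pC α β u0 π u - Fmap V c cand pC α β u0 π u' with hΔF
  have := hw_est ΔF
  rw [real_inner_self_eq_norm_sq] at this
  rcases eq_or_lt_of_le (norm_nonneg ΔF) with h0 | h0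
  · rw [← h0]
    positivity
  · have h2 : ‖ΔF‖ * ‖ΔF‖ ≤ 4 * αH * ρ * (2 * ρ + ‖u0‖) / (β + αNH) * ‖u - u'‖ * ‖ΔF‖ := by
      calc ‖ΔF‖ * ‖ΔF‖ = ‖ΔF‖ ^ 2 := by ring
        _ ≤ |‖ΔF‖ ^ 2| := le_abs_self _
        _ ≤ _ := this
    exact le_of_mul_le_mul_right h2 h0
end Assemble
/-- Theorem 2: Assume `0 < α_NH ≤ α_H`, `β ≥ 0`, and that every item
profile satisfies `‖v‖ < (1/6)(√(‖u0‖² + 12(α_NH+β)/(5 n d α_H)) − ‖u0‖)`. Then `F` is a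
contraction in its second argument uniformly over all policies: there is `L < 1`,
independent of `π`, with `‖F(π,u) − F(π,u')‖ ≤ L ‖u − u'‖` for all policies `π` and all
`u, u'`. -/
theorem stmt4 {d : ℕ} {ι : Type} [Fintype ι] [DecidableEq ι] [Nonempty ι]
    (V : ι → Vec d) (hV : Function.Injective V)
    (Hset : Finset ι) (c : ℝ) (hc : 0 < c)
    (αH αNH : ℝ) (hαNH : 0 < αNH) (hαHNH : αNH ≤ αH) (β : ℝ) (hβ : 0 ≤ β)
    (u0 : Vec d)
    (cand : Finset (Finset ι)) (hcand : ∀ C ∈ cand, Disjoint C Hset)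
    (pC : Finset ι → ℝ) (hpC0 : ∀ C ∈ cand, 0 ≤ pC C)
    (hpC1 : (∑ C ∈ cand, pC C) = 1)
    (hnorm : ∀ v : ι, ‖V v‖ < (1/6) * (Real.sqrt (‖u0‖^2
        + 12 * (αNH + β) / (5 * (Fintype.card ι : ℝ) * (d : ℝ) * αH)) - ‖u0‖)) :
    ∃ L : ℝ, L < 1 ∧
      ∀ π : Finset ι → Finset ι → ℝ, ValidPolicy cand π →
        ∀ u u' : Vec d,
          ‖Fmap V c cand pC (fun v => if v ∈ Hset then αH else αNH) β u0 π u
            - Fmap V c cand pC (fun v => if v ∈ Hset then αH else αNH) β u0 π u'‖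
            ≤ L * ‖u - u'‖ := by
  have hαH : 0 < αH := lt_of_lt_of_le hαNH hαHNH
  rcases Nat.eq_zero_or_pos d with hd | hd
  · -- degenerate dimension: the norm hypothesis is contradictory
    exfalso
    obtain ⟨v⟩ := ‹Nonempty ι›
    have h := hnorm v
    have hcast : ((d:ℕ):ℝ) = 0 := by rw [hd]; norm_num
    rw [hcast] at h
    simp only [Nat.cast_zero, mul_zero, zero_mul, div_zero, add_zero,
      Real.sqrt_sq (norm_nonneg u0), sub_self] at h
    have := norm_nonneg (V v)
    linarith
  · have hn : (1:ℝ) ≤ (Fintype.card ι : ℝ) := by exact_mod_cast Fintype.card_pos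
    have hd1 : (1:ℝ) ≤ (d:ℝ) := by exact_mod_cast hd
    set n : ℝ := (Fintype.card ι : ℝ) with hn_def
    have hden : 0 < 5 * n * (d:ℝ) * αH :=
      mul_pos (mul_pos (by linarith) (by linarith)) hαH
    set K : ℝ := 12 * (αNH + β) / (5 * n * (d:ℝ) * αH) with hK
    have hKpos : 0 < K := div_pos (by linarith) hden
    set ρ : ℝ := 1/6 * (Real.sqrt (‖u0‖^2 + K) - ‖u0‖) with hρdef
    have hsq : Real.sqrt (‖u0‖^2 + K) ^ 2 = ‖u0‖^2 + K :=
      Real.sq_sqrt (by positivity)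
    have hsqgt : ‖u0‖ < Real.sqrt (‖u0‖^2 + K) := by
      have h2 := Real.sqrt_lt_sqrt (sq_nonneg ‖u0‖) (lt_add_of_pos_right _ hKpos)
      rwa [Real.sqrt_sq (norm_nonneg _)] at h2
    have hρpos : 0 < ρ := by rw [hρdef]; linarith
    have hρ : ∀ v, ‖V v‖ ≤ ρ := fun v => (hnorm v).le
    have hs : 6 * ρ + ‖u0‖ = Real.sqrt (‖u0‖^2 + K) := by rw [hρdef]; ring
    have h36 : 36 * ρ^2 + 12 * ρ * ‖u0‖ = K := by
      rw [← hs] at hsq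
      linear_combination hsq
    have hkey : αNH + β = 5 * n * (d:ℝ) * αH * (3 * ρ^2 + ρ * ‖u0‖) := by
      have hA : K * (5 * n * (d:ℝ) * αH) = 12 * (αNH + β) := by
        rw [hK]; field_simp
      linear_combination (-1/12) * hA - (5 * n * (d:ℝ) * αH / 12) * h36
    have hβα : 0 < β + αNH := by linarith
    refine ⟨4 * αH * ρ * (2 * ρ + ‖u0‖) / (β + αNH), ?_, ?_⟩
    · rw [div_lt_one hβα]
      have hnd : (1:ℝ) ≤ n * (d:ℝ) := by nlinarith
      nlinarith [mul_pos hαH (mul_pos hρpos hρpos),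
        mul_nonneg (mul_nonneg hαH.le hρpos.le) (norm_nonneg u0),
        mul_nonneg (mul_nonneg (mul_nonneg hαH.le hρpos.le) hρpos.le)
          (sub_nonneg.2 hnd),
        mul_nonneg (mul_nonneg (mul_nonneg hαH.le hρpos.le) (norm_nonneg u0))
          (sub_nonneg.2 hnd)]
    · intro π hπ u u'
      refine key_estimate hpC0 hpC1 hπ hc hαNH hαH ?_ ?_ hβ u0 hρ hρpos.le u u'
      · intro v; by_cases h : v ∈ Hset <;> simp [h, hαHNH]
      · intro v; by_cases h : v ∈ Hset <;> simp [h, hαHNH]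

end
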